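/- Let L, T > 0, Ω = (-L/2, L/2) × (0, T), v > 0 and Λ > 1. Let f ∈ L¹(Ω; ℝ) satisfy f ≥ 0 almost everywhere in Ω and ∫_Ω f > 0. Then the function λ ↦ T_f(v,λ) is not identically zero on [1, Λ], and consequently ∫_1^Λ |T_f(v,λ)|² λ⁴ (λ² − 1)^{-1/2} dλ > 0; that is, a ship of finite length with positive displaced volume has strictly positive Michell wave resistance at every speed. -/

import Mathlib

/-!
The transform `λ ↦ T_f(v,λ)` is the restriction to the real axis of the entire function
`z ↦ ∫_Ω f(x,y) exp(-z² v y - i z v x)`, whose value at `z = 0` is `∫_Ω f ≠ 0`. By the identity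
theorem it cannot vanish on all of `(1, Λ)`, so the nonnegative continuous numerator of the
wave-resistance integrand is positive on a nonempty open subset of `(1, Λ)`. The weight
`(λ² - 1)^(-1/2)` is dominated by `(λ - 1)^(-1/2)`, hence integrable, so the integral is not a
junk value.
-/

open MeasureTheory Complex Set

/-- Michell-type transform of a function `f` on the rectangle `Ω`. -/
noncomputable def michellTransform (L T v lam : ℝ) (f : ℝ × ℝ → ℝ) : ℂ :=
  ∫ p in (Ioo (-L/2) (L/2)) ×ˢ (Ioo (0:ℝ) T),
    (f p : ℂ) * Complex.exp (-(lam^2 * v * p.2 : ℝ)) *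
      Complex.exp (-(Complex.I * lam * v * p.1))

open Filter Topology

theorem norm_cexp_quadratic_le {z a b : ℂ} {R C : ℝ} (hz : ‖z‖ ≤ R) (ha : ‖a‖ ≤ C)
    (hb : ‖b‖ ≤ C) : ‖cexp (z ^ 2 * a + z * b)‖ ≤ Real.exp ((R ^ 2 + R) * C) := by
  have hR : 0 ≤ R := (norm_nonneg z).trans hz
  rw [Complex.norm_exp, Real.exp_le_exp]
  calc (z ^ 2 * a + z * b).re ≤ ‖z ^ 2 * a + z * b‖ := re_le_norm _
    _ ≤ ‖z‖ ^ 2 * ‖a‖ + ‖z‖ * ‖b‖ :=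
        (norm_add_le _ _).trans_eq (by rw [norm_mul, norm_mul, norm_pow])
    _ ≤ R ^ 2 * C + R * C := by gcongr
    _ = (R ^ 2 + R) * C := by ring

theorem differentiable_integral_mul_cexp_quadratic {α : Type*} [MeasurableSpace α]
    {μ : Measure α} {f a b : α → ℂ} {C : ℝ} (hf : Integrable f μ)
    (ha : AEStronglyMeasurable a μ) (hb : AEStronglyMeasurable b μ)
    (haC : ∀ᵐ x ∂μ, ‖a x‖ ≤ C) (hbC : ∀ᵐ x ∂μ, ‖b x‖ ≤ C) :
    Differentiable ℂ fun z => ∫ x, f x * cexp (z ^ 2 * a x + z * b x) ∂μ := by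
  intro z₀
  set R := ‖z₀‖ + 1
  have hexp : ∀ z : ℂ, AEStronglyMeasurable (fun x => cexp (z ^ 2 * a x + z * b x)) μ :=
    fun z => continuous_exp.comp_aestronglyMeasurable ((ha.const_mul _).add (hb.const_mul _))
  have hmeas : ∀ z : ℂ, AEStronglyMeasurable (fun x => f x * cexp (z ^ 2 * a x + z * b x)) μ :=
    fun z => hf.1.mul (hexp z)
  have hball : ∀ z ∈ Metric.ball z₀ 1, ‖z‖ ≤ R := fun z hz => by
    have := norm_le_norm_add_norm_sub' z z₀
    rw [mem_ball_iff_norm] at hz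
    linarith
  have hint : Integrable (fun x => f x * cexp (z₀ ^ 2 * a x + z₀ * b x)) μ := by
    refine (hf.norm.mul_const (Real.exp ((R ^ 2 + R) * C))).mono' (hmeas z₀) ?_
    filter_upwards [haC, hbC] with x hax hbx
    rw [norm_mul]
    gcongr
    exact norm_cexp_quadratic_le (by simp [R]) hax hbx
  have key := hasDerivAt_integral_of_dominated_loc_of_deriv_le
    (F' := fun z x => f x * (cexp (z ^ 2 * a x + z * b x) * (2 * z * a x + b x)))
    (bound := fun x => ‖f x‖ * (Real.exp ((R ^ 2 + R) * C) * (2 * R * C + C)))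
    (Metric.ball_mem_nhds z₀ one_pos) (.of_forall hmeas) hint
    (hf.1.mul ((hexp z₀).mul ((ha.const_mul (2 * z₀)).add hb))) ?_
    (hf.norm.mul_const _) (.of_forall fun x z _ => ?_)
  · exact key.2.differentiableAt
  · filter_upwards [haC, hbC] with x hax hbx z hz
    have hzR := hball z hz
    have hlin : ‖2 * z * a x + b x‖ ≤ 2 * R * C + C :=
      calc ‖2 * z * a x + b x‖ ≤ 2 * ‖z‖ * ‖a x‖ + ‖b x‖ := by
            refine (norm_add_le _ _).trans_eq ?_
            rw [norm_mul, norm_mul, Complex.norm_ofNat]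
        _ ≤ 2 * R * C + C := by gcongr
    rw [norm_mul, norm_mul]
    gcongr
    exact norm_cexp_quadratic_le hzR hax hbx
  have hpoly : HasDerivAt (fun y => y ^ 2 * a x + y * b x) (2 * z * a x + b x) z := by
    have := ((hasDerivAt_pow 2 z).mul_const (a x)).fun_add ((hasDerivAt_id' z).mul_const (b x))
    exact this.congr_deriv (by push_cast; ring)
  exact hpoly.cexp.const_mul (f x)

theorem Differentiable.eq_zero_of_forall_mem_Ioo {E : Type*} [NormedAddCommGroup E]
    [NormedSpace ℂ E] [CompleteSpace E] {g : ℂ → E} (hg : Differentiable ℂ g) {a b : ℝ}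
    (hab : a < b) (hzero : ∀ x ∈ Ioo a b, g x = 0) : g = 0 := by
  obtain ⟨x₀, hx₀⟩ := nonempty_Ioo.2 hab
  have hreal : ∀ᶠ x : ℝ in 𝓝[≠] x₀, g x = 0 :=
    eventually_nhdsWithin_of_eventually_nhds (eventually_of_mem (isOpen_Ioo.mem_nhds hx₀) hzero)
  have hofReal : Tendsto ((↑) : ℝ → ℂ) (𝓝[≠] x₀) (𝓝[≠] (x₀ : ℂ)) :=
    continuous_ofReal.continuousWithinAt.tendsto_nhdsWithin fun _ => ofReal_injective.ne
  have hanalytic : AnalyticOnNhd ℂ g univ := fun w _ => hg.analyticAt w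
  funext z
  exact hanalytic.eqOn_zero_of_preconnected_of_frequently_eq_zero isPreconnected_univ
    (mem_univ _) (hofReal.frequently hreal.frequently) (mem_univ z)

theorem integrableOn_inv_sqrt_sq_sub_one (b : ℝ) :
    IntegrableOn (fun x => (√(x ^ 2 - 1))⁻¹) (Ioo 1 b) := by
  have hrpow : IntegrableOn (fun x : ℝ => (x - 1) ^ (-(1 / 2) : ℝ)) (Ioo 1 b) := by
    have h := (intervalIntegral.intervalIntegrable_rpow' (a := 0) (b := b - 1)
      (r := -(1 / 2)) (by norm_num)).comp_sub_right 1
    rw [zero_add, sub_add_cancel, intervalIntegrable_iff] at h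
    exact h.mono_set (Ioo_subset_Ioc_self.trans Ioc_subset_uIoc)
  refine hrpow.mono' (by fun_prop) ((ae_restrict_iff' measurableSet_Ioo).2 (.of_forall ?_))
  intro x hx
  have hx1 : 0 < x - 1 := sub_pos.2 hx.1
  rw [Real.norm_of_nonneg (by positivity), Real.rpow_neg hx1.le, ← Real.sqrt_eq_rpow]
  exact inv_anti₀ (Real.sqrt_pos.2 hx1) (Real.sqrt_le_sqrt (by nlinarith))

theorem integrableOn_div_sqrt_sq_sub_one {φ : ℝ → ℝ} {b : ℝ} (hφ : ContinuousOn φ (Icc 1 b)) :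
    IntegrableOn (fun x => φ x / √(x ^ 2 - 1)) (Ioo 1 b) := by
  simp only [div_eq_mul_inv]
  exact (integrableOn_inv_sqrt_sq_sub_one b).continuousOn_mul_of_subset hφ isCompact_Icc
    measurableSet_Ioo Ioo_subset_Icc_self

theorem setIntegral_pos_of_pos_on_isOpen {X : Type*} [TopologicalSpace X] [MeasurableSpace X]
    [OpensMeasurableSpace X] {μ : Measure X} [μ.IsOpenPosMeasure] {s U : Set X} {h : X → ℝ}
    (hs : MeasurableSet s) (hint : IntegrableOn h s μ) (hnonneg : ∀ x ∈ s, 0 ≤ h x)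
    (hU : IsOpen U) (hUne : U.Nonempty) (hUs : U ⊆ s) (hpos : ∀ x ∈ U, 0 < h x) :
    0 < ∫ x in s, h x ∂μ := by
  rw [setIntegral_pos_iff_support_of_nonneg_ae (ae_restrict_of_forall_mem hs hnonneg) hint]
  exact (hU.measure_pos μ hUne).trans_le
    (measure_mono fun x hx => ⟨(hpos x hx).ne', hUs hx⟩)

noncomputable def complexMichellTransform (L T v : ℝ) (f : ℝ × ℝ → ℝ) (z : ℂ) : ℂ :=
  ∫ p in Ioo (-L/2) (L/2) ×ˢ Ioo (0:ℝ) T,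
    (f p : ℂ) * cexp (z ^ 2 * -(v * p.2 : ℂ) + z * -(I * v * p.1))

section Michell

variable {L T v : ℝ} {f : ℝ × ℝ → ℝ}

theorem complexMichellTransform_ofReal (lam : ℝ) :
    complexMichellTransform L T v f lam = michellTransform L T v lam f := by
  refine integral_congr_ae (.of_forall fun p => ?_)
  simp only [mul_assoc, ← Complex.exp_add]
  push_cast
  ring_nf

theorem complexMichellTransform_zero :
    complexMichellTransform L T v f 0 = ∫ p in Ioo (-L/2) (L/2) ×ˢ Ioo (0:ℝ) T, f p := by
  simp only [complexMichellTransform, ne_eq, OfNat.ofNat_ne_zero, not_false_eq_true, zero_pow,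
    zero_mul, add_zero, exp_zero, mul_one]
  exact integral_ofReal

theorem differentiable_complexMichellTransform
    (hf : IntegrableOn f (Ioo (-L/2) (L/2) ×ˢ Ioo (0:ℝ) T)) :
    Differentiable ℂ (complexMichellTransform L T v f) := by
  have hΩ : MeasurableSet (Ioo (-L/2) (L/2) ×ˢ Ioo (0:ℝ) T) :=
    measurableSet_Ioo.prod measurableSet_Ioo
  have hbound : ∀ p ∈ Ioo (-L/2) (L/2) ×ˢ Ioo (0:ℝ) T, |p.1| ≤ L/2 + T ∧ |p.2| ≤ L/2 + T :=
    fun p ⟨⟨h1, h2⟩, h3, h4⟩ =>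
      ⟨abs_le.2 ⟨by linarith, by linarith⟩, abs_le.2 ⟨by linarith, by linarith⟩⟩
  refine differentiable_integral_mul_cexp_quadratic (C := |v| * (L/2 + T)) hf.ofReal
    (by fun_prop) (by fun_prop) (ae_restrict_of_forall_mem hΩ fun p hp => ?_)
    (ae_restrict_of_forall_mem hΩ fun p hp => ?_)
  · simpa [abs_mul] using mul_le_mul_of_nonneg_left (hbound p hp).2 (abs_nonneg v)
  · simpa [abs_mul] using mul_le_mul_of_nonneg_left (hbound p hp).1 (abs_nonneg v)

theorem continuous_michellTransform (hf : IntegrableOn f (Ioo (-L/2) (L/2) ×ˢ Ioo (0:ℝ) T)) :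
    Continuous fun lam => michellTransform L T v lam f := by
  simp_rw [← complexMichellTransform_ofReal]
  exact (differentiable_complexMichellTransform hf).continuous.comp continuous_ofReal

theorem exists_michellTransform_ne_zero {a b : ℝ} (hab : a < b)
    (hf : IntegrableOn f (Ioo (-L/2) (L/2) ×ˢ Ioo (0:ℝ) T))
    (hvol : ∫ p in Ioo (-L/2) (L/2) ×ˢ Ioo (0:ℝ) T, f p ≠ 0) :
    ∃ lam ∈ Ioo a b, michellTransform L T v lam f ≠ 0 := by
  by_contra! h
  have hzero := (differentiable_complexMichellTransform (v := v) hf).eq_zero_of_forall_mem_Ioo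
    hab fun x hx => (complexMichellTransform_ofReal x).trans (h x hx)
  have h0 := congrFun hzero 0
  rw [complexMichellTransform_zero, Pi.zero_apply, ofReal_eq_zero] at h0
  exact hvol h0

end Michell

theorem stmt10_general (L T v Λ : ℝ) (hΛ : 1 < Λ)
    (f : ℝ × ℝ → ℝ)
    (hf : IntegrableOn f ((Ioo (-L/2) (L/2)) ×ˢ (Ioo (0:ℝ) T)))
    (hvol : 0 < ∫ p in (Ioo (-L/2) (L/2)) ×ˢ (Ioo (0:ℝ) T), f p) :
    (¬ ∀ lam ∈ Icc (1:ℝ) Λ, michellTransform L T v lam f = 0) ∧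
    0 < ∫ lam in Ioo (1:ℝ) Λ,
        ‖michellTransform L T v lam f‖ ^ 2 * lam ^ 4 /
          Real.sqrt (lam ^ 2 - 1) := by
  obtain ⟨lam₀, hlam₀, hne⟩ := exists_michellTransform_ne_zero (v := v) hΛ hf hvol.ne'
  refine ⟨fun h => hne (h lam₀ (Ioo_subset_Icc_self hlam₀)), ?_⟩
  have hcont := continuous_michellTransform (v := v) hf
  refine setIntegral_pos_of_pos_on_isOpen measurableSet_Ioo
    (integrableOn_div_sqrt_sq_sub_one (by fun_prop)) (fun x _ => by positivity)
    (isOpen_Ioo.inter (isOpen_ne_fun hcont continuous_const)) ⟨lam₀, hlam₀, hne⟩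
    inter_subset_left fun x ⟨hx, hxne⟩ => ?_
  have hx1 : 0 < x ^ 2 - 1 := by nlinarith [hx.1]
  exact div_pos (mul_pos (pow_pos (norm_pos_iff.2 hxne) 2) (pow_pos (by linarith [hx.1]) 4))
    (Real.sqrt_pos.2 hx1)

theorem stmt10 (L T v Λ : ℝ) (hL : 0 < L) (hT : 0 < T) (hv : 0 < v) (hΛ : 1 < Λ)
    (f : ℝ × ℝ → ℝ)
    (hf : IntegrableOn f ((Ioo (-L/2) (L/2)) ×ˢ (Ioo (0:ℝ) T)))
    (hpos : ∀ᵐ p ∂(volume.restrict ((Ioo (-L/2) (L/2)) ×ˢ (Ioo (0:ℝ) T))), 0 ≤ f p)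
    (hvol : 0 < ∫ p in (Ioo (-L/2) (L/2)) ×ˢ (Ioo (0:ℝ) T), f p) :
    (¬ ∀ lam ∈ Icc (1:ℝ) Λ, michellTransform L T v lam f = 0) ∧
    0 < ∫ lam in Ioo (1:ℝ) Λ,
        ‖michellTransform L T v lam f‖ ^ 2 * lam ^ 4 /
          Real.sqrt (lam ^ 2 - 1) :=
  stmt10_general L T v Λ hΛ f hf hvol
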